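/- For every left-invariant vector field V = a e₁ + b e₂ + c e₃ + d e₄ (a,b,c,d ∈ ℝ), the rough Laplacian is given by ∇*∇V = −A²a e₁ + ((B²−A²)b − 3ABc) e₂ + ((B²−A²)c − 3ABb) e₃ − 3A²d e₄. In particular, if V = b(e₂ + e₃), then ∇*∇V = (B²−A²−3AB)·V, so V is a critical point for the energy functional restricted to left-invariant vector fields of the same length. -/

import Mathlib

/-!
In an orthonormal basis of a pseudo-Riemannian inner product, a vector is determined by its
inner products with the basis vectors, so the Koszul formula pins down every `∇_{eᵢ} eⱼ` from
the structure constants. The rough Laplacian of `V = a e₁ + b e₂ + c e₃ + d e₄` is then a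
finite computation with this connection table; on `e₂ + e₃` it acts by the scalar
`B² − A² − 3AB`.
-/

open Module

theorem Module.Basis.bilin_apply_basis_eq_repr_mul {K M ι : Type*} [Field K] [AddCommGroup M]
    [Module K M] [Fintype ι] [DecidableEq ι] (e : Basis ι K M) (g : M →ₗ[K] M →ₗ[K] K) (ε : ι → K)
    (hg : ∀ i j, g (e i) (e j) = if i = j then ε i else 0) (X : M) (k : ι) :
    g X (e k) = e.repr X k * ε k := by
  conv_lhs => rw [← e.sum_repr X, map_sum, LinearMap.sum_apply]
  simp [hg]

theorem Module.Basis.eq_of_forall_bilin_apply_eq {K M ι : Type*} [Field K] [AddCommGroup M]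
    [Module K M] [Fintype ι] [DecidableEq ι] (e : Basis ι K M) (g : M →ₗ[K] M →ₗ[K] K)
    (ε : ι → K) (hε : ∀ i, ε i ≠ 0) (hg : ∀ i j, g (e i) (e j) = if i = j then ε i else 0)
    {X Y : M} (h : ∀ k, g X (e k) = g Y (e k)) : X = Y :=
  e.ext_elem fun k => mul_right_cancel₀ (hε k) <| by
    rw [← e.bilin_apply_basis_eq_repr_mul g ε hg, ← e.bilin_apply_basis_eq_repr_mul g ε hg,
      h]

section

variable {G : Type*} [AddCommGroup G] [Module ℝ G]

def roughLaplacian {n : ℕ} (e : Fin n → G) (ε : Fin n → ℝ) (nabla : G →ₗ[ℝ] G →ₗ[ℝ] G)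
    (V : G) : G :=
  ∑ i, ε i • (nabla (e i) (nabla (e i) V) - nabla (nabla (e i) (e i)) V)

def bracketTable (A B : ℝ) (e : Fin 4 → G) : Fin 4 → Fin 4 → G :=
  ![![0, 0, 0, A • e 0],
    ![0, 0, 0, A • e 1 + B • e 2],
    ![0, 0, 0, B • e 1 + A • e 2],
    ![-(A • e 0), -(A • e 1 + B • e 2), -(B • e 1 + A • e 2), 0]]

-- entry `(i, j)` is `∇_{eᵢ} eⱼ`
def connectionTable (A B : ℝ) (e : Fin 4 → G) : Fin 4 → Fin 4 → G :=
  ![![(-A) • e 3, 0, 0, A • e 0],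
    ![0, (-A) • e 3, 0, A • e 1],
    ![0, 0, A • e 3, A • e 2],
    ![0, (-B) • e 2, (-B) • e 1, 0]]

theorem apply_basis_eq_bracketTable (e : Fin 4 → G) (lie : G →ₗ[ℝ] G →ₗ[ℝ] G) (A B : ℝ)
    (hanti : ∀ X Y : G, lie X Y = - lie Y X)
    (h12 : lie (e 0) (e 1) = 0) (h13 : lie (e 0) (e 2) = 0)
    (h14 : lie (e 0) (e 3) = A • e 0)
    (h23 : lie (e 1) (e 2) = 0) (h24 : lie (e 1) (e 3) = A • e 1 + B • e 2)
    (h34 : lie (e 2) (e 3) = B • e 1 + A • e 2) (i j : Fin 4) :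
    lie (e i) (e j) = bracketTable A B e i j := by
  have := IsAddTorsionFree.of_isTorsionFree ℝ G
  have hself (X : G) : lie X X = 0 := self_eq_neg.mp (hanti X X)
  fin_cases i <;> fin_cases j <;>
    first
    | simp [bracketTable, hself, h12, h13, h14, h23, h24, h34]; done
    | rw [hanti]; simp [bracketTable, h12, h13, h14, h23, h24, h34, add_comm]

theorem apply_basis_eq_connectionTable (e : Basis (Fin 4) ℝ G)
    (lie nabla : G →ₗ[ℝ] G →ₗ[ℝ] G) (g : G →ₗ[ℝ] G →ₗ[ℝ] ℝ) (A B : ℝ)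
    (hlie : ∀ i j, lie (e i) (e j) = bracketTable A B e i j)
    (hg : ∀ i j : Fin 4, g (e i) (e j) =
      if i = j then (if i = 2 then (-1 : ℝ) else 1) else 0)
    (hK : ∀ X Y Z : G,
      2 * g (nabla X Y) Z = g (lie X Y) Z - g (lie Y Z) X + g (lie Z X) Y)
    (i j : Fin 4) :
    nabla (e i) (e j) = connectionTable A B e i j := by
  refine e.eq_of_forall_bilin_apply_eq g _ (fun k => by split_ifs <;> norm_num) hg
    fun k => ?_
  have hkoszul := hK (e i) (e j) (e k)
  rw [hlie, hlie, hlie] at hkoszul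
  fin_cases i <;> fin_cases j <;> fin_cases k <;>
    simp [bracketTable, connectionTable, hg] at hkoszul ⊢ <;> linarith

theorem roughLaplacian_eq_of_connectionTable (e : Fin 4 → G) (nabla : G →ₗ[ℝ] G →ₗ[ℝ] G)
    (A B : ℝ) (hnabla : ∀ i j, nabla (e i) (e j) = connectionTable A B e i j) (a b c d : ℝ) :
    roughLaplacian e (fun i => if i = 2 then -1 else 1) nabla
        (a • e 0 + b • e 1 + c • e 2 + d • e 3)
      = (-(A ^ 2 * a)) • e 0 + ((B ^ 2 - A ^ 2) * b - 3 * A * B * c) • e 1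
        + ((B ^ 2 - A ^ 2) * c - 3 * A * B * b) • e 2 + (-(3 * A ^ 2 * d)) • e 3 := by
  simp [roughLaplacian, Fin.sum_univ_four, hnabla, connectionTable]
  module

end

theorem stmt_8_general {G : Type*} [AddCommGroup G] [Module ℝ G]
    (e : Module.Basis (Fin 4) ℝ G)
    (lie : G →ₗ[ℝ] G →ₗ[ℝ] G)
    (g : G →ₗ[ℝ] G →ₗ[ℝ] ℝ)
    (nabla : G →ₗ[ℝ] G →ₗ[ℝ] G)
    (A B : ℝ)
    (hanti : ∀ X Y : G, lie X Y = - lie Y X)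
    (h12 : lie (e 0) (e 1) = 0)
    (h13 : lie (e 0) (e 2) = 0)
    (h14 : lie (e 0) (e 3) = A • e 0)
    (h23 : lie (e 1) (e 2) = 0)
    (h24 : lie (e 1) (e 3) = A • e 1 + B • e 2)
    (h34 : lie (e 2) (e 3) = B • e 1 + A • e 2)
    (hg : ∀ i j : Fin 4, g (e i) (e j) = if i = j then (if i = 2 then (-1 : ℝ) else 1) else 0)
    (hK : ∀ X Y Z : G, 2 * g (nabla X Y) Z = g (lie X Y) Z - g (lie Y Z) X + g (lie Z X) Y) :
    (let eps : Fin 4 → ℝ := fun i => if i = (2 : Fin 4) then (-1 : ℝ) else 1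
     let lap : G → G := fun V : G => ∑ i : Fin 4, eps i • (nabla (e i) (nabla (e i) V) - nabla (nabla (e i) (e i)) V)
     (∀ a b c d : ℝ,
        lap (a • e 0 + b • e 1 + c • e 2 + d • e 3)
          = (-(A ^ 2 * a)) • e 0 + ((B ^ 2 - A ^ 2) * b - 3 * A * B * c) • e 1
            + ((B ^ 2 - A ^ 2) * c - 3 * A * B * b) • e 2 + (-(3 * A ^ 2 * d)) • e 3) ∧
     (∀ b : ℝ,
        lap (b • (e 1 + e 2)) = (B ^ 2 - A ^ 2 - 3 * A * B) • (b • (e 1 + e 2)) ∧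
        ∃ lam : ℝ, lap (b • (e 1 + e 2)) = lam • (b • (e 1 + e 2)))) := by
  intro eps lap
  have hlie := apply_basis_eq_bracketTable e lie A B hanti h12 h13 h14 h23 h24 h34
  have hlap := roughLaplacian_eq_of_connectionTable e nabla A B
    (apply_basis_eq_connectionTable e lie nabla g A B hlie hg hK)
  have hV (b : ℝ) : lap (b • (e 1 + e 2)) = (B ^ 2 - A ^ 2 - 3 * A * B) • (b • (e 1 + e 2)) := by
    have hcoord : b • (e 1 + e 2) = (0 : ℝ) • e 0 + b • e 1 + b • e 2 + (0 : ℝ) • e 3 := by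
      module
    rw [hcoord]
    exact (hlap 0 b b 0).trans (by module)
  exact ⟨hlap, fun b => ⟨hV b, _, hV b⟩⟩

theorem stmt_8 {G : Type*} [AddCommGroup G] [Module ℝ G]
    (e : Module.Basis (Fin 4) ℝ G)
    (lie : G →ₗ[ℝ] G →ₗ[ℝ] G)
    (g : G →ₗ[ℝ] G →ₗ[ℝ] ℝ)
    (nabla : G →ₗ[ℝ] G →ₗ[ℝ] G)
    (A B : ℝ)
    (hanti : ∀ X Y : G, lie X Y = - lie Y X)
    (h12 : lie (e 0) (e 1) = 0)
    (h13 : lie (e 0) (e 2) = 0)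
    (h14 : lie (e 0) (e 3) = A • e 0)
    (h23 : lie (e 1) (e 2) = 0)
    (h24 : lie (e 1) (e 3) = A • e 1 + B • e 2)
    (h34 : lie (e 2) (e 3) = B • e 1 + A • e 2)
    (hg : ∀ i j : Fin 4, g (e i) (e j) = if i = j then (if i = 2 then (-1 : ℝ) else 1) else 0)
    (hgsymm : ∀ X Y : G, g X Y = g Y X)
    (hK : ∀ X Y Z : G, 2 * g (nabla X Y) Z = g (lie X Y) Z - g (lie Y Z) X + g (lie Z X) Y) :
    (let eps : Fin 4 → ℝ := fun i => if i = (2 : Fin 4) then (-1 : ℝ) else 1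
     let lap : G → G := fun V : G => ∑ i : Fin 4, eps i • (nabla (e i) (nabla (e i) V) - nabla (nabla (e i) (e i)) V)
     (∀ a b c d : ℝ,
        lap (a • e 0 + b • e 1 + c • e 2 + d • e 3)
          = (-(A ^ 2 * a)) • e 0 + ((B ^ 2 - A ^ 2) * b - 3 * A * B * c) • e 1
            + ((B ^ 2 - A ^ 2) * c - 3 * A * B * b) • e 2 + (-(3 * A ^ 2 * d)) • e 3) ∧
     (∀ b : ℝ,
        lap (b • (e 1 + e 2)) = (B ^ 2 - A ^ 2 - 3 * A * B) • (b • (e 1 + e 2)) ∧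
        ∃ lam : ℝ, lap (b • (e 1 + e 2)) = lam • (b • (e 1 + e 2)))) :=
  stmt_8_general e lie g nabla A B hanti h12 h13 h14 h23 h24 h34 hg hK
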